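/- arXiv:1208.6140 — 2 statements merged into one kernel-verified Lean document; each statement's English description precedes it below -/
import Mathlib

section
/- Let H be a real inner product space, A : H → H a linear map, and let δ > 0, τ > 0 and σ ≥ 1/2 be real numbers. Assume that ⟪A u, u⟫ ≥ -δ‖u‖² for all u ∈ H. If a sequence y : ℕ → H satisfies, for every n, the scheme (exp(-δτ)·y(n+1) - y(n))/τ + (A + δ·id)(σ·exp(-δτ)·y(n+1) + (1-σ)·y(n)) = 0, then for every n one has ‖y(n)‖ ≤ exp(n·δ·τ)·‖y(0)‖. -/
/-!
Write `e = exp(-δτ)`. The scheme is the weighted (θ-)scheme with step `τ` for the operator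
`B = A + δ·id`, which is nonnegative, applied to `v = e·y(n+1)` and `u = y n`. Pairing it with
`w = σ v + (1 - σ) u` and using `⟪v - u, w⟫ = (‖v‖² - ‖u‖²)/2 + (σ - 1/2)‖v - u‖²` gives
`‖v‖ ≤ ‖u‖` when `σ ≥ 1/2`, i.e. `‖y(n+1)‖ ≤ exp(δτ)‖y n‖`, which iterates.
-/

open scoped RealInnerProductSpace

section WeightedScheme

variable {H : Type*} [NormedAddCommGroup H] [InnerProductSpace ℝ H]

theorem inner_sub_weighted_mean (u v : H) (σ : ℝ) :
    ⟪v - u, σ • v + (1 - σ) • u⟫ = (‖v‖ ^ 2 - ‖u‖ ^ 2) / 2 + (σ - 1 / 2) * ‖v - u‖ ^ 2 := by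
  simp only [inner_sub_left, inner_add_right, real_inner_smul_right, real_inner_self_eq_norm_sq]
  linear_combination (1 / 2 - σ) * norm_sub_sq_real v u - σ * real_inner_comm v u

theorem norm_le_of_weighted_scheme (B : H → H) (hB : ∀ w, 0 ≤ ⟪B w, w⟫) {τ σ : ℝ}
    (hτ : 0 < τ) (hσ : 1 / 2 ≤ σ) {u v : H}
    (hscheme : (1 / τ) • (v - u) + B (σ • v + (1 - σ) • u) = 0) : ‖v‖ ≤ ‖u‖ := by
  set w := σ • v + (1 - σ) • u
  have hpair : (1 / τ) * ⟪v - u, w⟫ + ⟪B w, w⟫ = 0 := by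
    simpa only [inner_add_left, real_inner_smul_left, inner_zero_left] using
      congrArg (⟪·, w⟫) hscheme
  have hdissip : ⟪v - u, w⟫ ≤ 0 := by
    have : (1 / τ) * ⟪v - u, w⟫ ≤ 0 := by linarith [hB w]
    exact nonpos_of_mul_nonpos_right this (by positivity)
  rw [inner_sub_weighted_mean] at hdissip
  have hsq : ‖v‖ ^ 2 ≤ ‖u‖ ^ 2 := by
    nlinarith [mul_nonneg (sub_nonneg.mpr hσ) (sq_nonneg ‖v - u‖)]
  exact le_of_sq_le_sq hsq (norm_nonneg u)

end WeightedScheme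

theorem stmt_1_general {H : Type*} [NormedAddCommGroup H] [InnerProductSpace ℝ H]
    (A : H →ₗ[ℝ] H) (δ τ σ : ℝ) (hτ : 0 < τ) (hσ : 1 / 2 ≤ σ)
    (hA : ∀ u : H, ⟪A u, u⟫ ≥ -δ * ‖u‖ ^ 2)
    (y : ℕ → H)
    (hscheme : ∀ n : ℕ,
      (1 / τ) • (Real.exp (-δ * τ) • y (n + 1) - y n) +
        (A (σ • Real.exp (-δ * τ) • y (n + 1) + (1 - σ) • y n) +
          δ • (σ • Real.exp (-δ * τ) • y (n + 1) + (1 - σ) • y n)) = 0) :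
    ∀ n : ℕ, ‖y n‖ ≤ Real.exp (n * δ * τ) * ‖y 0‖ := by
  have hshift : ∀ w : H, 0 ≤ ⟪A w + δ • w, w⟫ := fun w => by
    rw [inner_add_left, real_inner_smul_left, real_inner_self_eq_norm_sq]
    linarith [hA w]
  have hstep : ∀ n, ‖y (n + 1)‖ ≤ Real.exp (δ * τ) * ‖y n‖ := fun n => by
    have h := norm_le_of_weighted_scheme (fun w => A w + δ • w) hshift hτ hσ (hscheme n)
    rw [norm_smul, Real.norm_of_nonneg (Real.exp_pos _).le] at h
    calc ‖y (n + 1)‖ = Real.exp (δ * τ) * (Real.exp (-δ * τ) * ‖y (n + 1)‖) := by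
          rw [← mul_assoc, ← Real.exp_add, neg_mul, add_neg_cancel, Real.exp_zero, one_mul]
      _ ≤ Real.exp (δ * τ) * ‖y n‖ := by gcongr
  intro n
  rw [mul_assoc, Real.exp_nat_mul]
  exact le_geom (u := fun k => ‖y k‖) (Real.exp_pos _).le n fun k _ => hstep k

/-- Iterated form of Theorem 1 of the paper: ρ-stability with `ρ = exp(δτ)`
over `n` steps of the scheme. -/
theorem stmt_1 {H : Type*} [NormedAddCommGroup H] [InnerProductSpace ℝ H]
    (A : H →ₗ[ℝ] H) (δ τ σ : ℝ) (hδ : 0 < δ) (hτ : 0 < τ) (hσ : 1 / 2 ≤ σ)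
    (hA : ∀ u : H, ⟪A u, u⟫ ≥ -δ * ‖u‖ ^ 2)
    (y : ℕ → H)
    (hscheme : ∀ n : ℕ,
      (1 / τ) • (Real.exp (-δ * τ) • y (n + 1) - y n) +
        (A (σ • Real.exp (-δ * τ) • y (n + 1) + (1 - σ) • y n) +
          δ • (σ • Real.exp (-δ * τ) • y (n + 1) + (1 - σ) • y n)) = 0) :
    ∀ n : ℕ, ‖y n‖ ≤ Real.exp (n * δ * τ) * ‖y 0‖ :=
  stmt_1_general A δ τ σ hτ hσ hA y hscheme
end

section
/- Let H be a real inner product space and let C₀, D, R₊, R₋ : H → H be linear maps such that: ⟪C₀ u, u⟫ = 0 for all u, ⟪D u, u⟫ ≥ 0 for all u, 0 ≤ ⟪R₊ u, u⟫ for all u, and R₋ is self-adjoint with -δ‖u‖² ≤ ⟪R₋ u, u⟫ ≤ 0 and ‖R₋ u‖ ≤ δ‖u‖ for all u, where δ > 0. Let τ > 0. If a sequence y : ℕ → H satisfies, for every n, the scheme (y(n+1) - y(n))/τ + (C₀ + D + R₊) y(n+1) + R₋ y(n) = 0, then ‖y(n)‖ ≤ (1 + δτ)ⁿ·‖y(0)‖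 for every n. -/
/-!
Multiplying the scheme by `τ` gives `(I + τA) yⁿ⁺¹ = (I - τR₋) yⁿ` with `A = C₀ + D + R₊`
accretive. Accretivity makes `I + τA` norm-nondecreasing, so
`‖yⁿ⁺¹‖ ≤ ‖(I - τR₋) yⁿ‖ ≤ (1 + δτ) ‖yⁿ‖`, and the bound iterates geometrically.
-/

open scoped RealInnerProductSpace

section Accretive

variable {H : Type*} [NormedAddCommGroup H] [InnerProductSpace ℝ H]

theorem norm_le_norm_add_of_inner_nonneg {v w : H} (h : 0 ≤ ⟪v, w⟫) : ‖v‖ ≤ ‖v + w‖ := by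
  refine le_of_sq_le_sq ?_ (norm_nonneg _)
  rw [norm_add_sq_real]
  nlinarith [sq_nonneg ‖w‖]

theorem norm_le_norm_add_smul_of_accretive {A : H →ₗ[ℝ] H} (hA : ∀ u, 0 ≤ ⟪A u, u⟫)
    {τ : ℝ} (hτ : 0 ≤ τ) (v : H) : ‖v‖ ≤ ‖v + τ • A v‖ :=
  norm_le_norm_add_of_inner_nonneg <| by
    rw [real_inner_smul_right, real_inner_comm]
    exact mul_nonneg hτ (hA v)

theorem norm_sub_smul_le_of_norm_le {B : H →ₗ[ℝ] H} {δ : ℝ} (hB : ∀ u, ‖B u‖ ≤ δ * ‖u‖)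
    {τ : ℝ} (hτ : 0 ≤ τ) (u : H) : ‖u - τ • B u‖ ≤ (1 + δ * τ) * ‖u‖ :=
  calc ‖u - τ • B u‖ ≤ ‖u‖ + τ * ‖B u‖ :=
        (norm_sub_le _ _).trans_eq (by rw [norm_smul, Real.norm_of_nonneg hτ])
    _ ≤ ‖u‖ + τ * (δ * ‖u‖) := by gcongr; exact hB u
    _ = (1 + δ * τ) * ‖u‖ := by ring

theorem norm_le_of_add_smul_eq_sub_smul {A B : H →ₗ[ℝ] H} (hA : ∀ u, 0 ≤ ⟪A u, u⟫)
    {δ : ℝ} (hB : ∀ u, ‖B u‖ ≤ δ * ‖u‖) {τ : ℝ} (hτ : 0 ≤ τ) {u v : H}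
    (h : v + τ • A v = u - τ • B u) : ‖v‖ ≤ (1 + δ * τ) * ‖u‖ :=
  calc ‖v‖ ≤ ‖v + τ • A v‖ := norm_le_norm_add_smul_of_accretive hA hτ v
    _ = ‖u - τ • B u‖ := by rw [h]
    _ ≤ (1 + δ * τ) * ‖u‖ := norm_sub_smul_le_of_norm_le hB hτ u

end Accretive

theorem add_smul_eq_sub_smul_of_difference_quotient {E : Type*} [AddCommGroup E] [Module ℝ E]
    {τ : ℝ} (hτ : τ ≠ 0) {u v a b : E} (h : (1 / τ) • (v - u) + a + b = 0) :
    v + τ • a = u - τ • b := by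
  have h' := congrArg (τ • ·) h
  simp only [smul_add, smul_smul, mul_one_div_cancel hτ, one_smul, smul_zero] at h'
  rw [← sub_eq_zero, ← h']
  abel

theorem stmt_7_general {H : Type*} [NormedAddCommGroup H] [InnerProductSpace ℝ H]
    (C₀ D Rp Rm : H →ₗ[ℝ] H) (δ τ : ℝ) (hδ : 0 < δ) (hτ : 0 < τ)
    (hC₀ : ∀ u : H, ⟪C₀ u, u⟫ = 0)
    (hD : ∀ u : H, 0 ≤ ⟪D u, u⟫)
    (hRp : ∀ u : H, 0 ≤ ⟪Rp u, u⟫)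
    (hRmNorm : ∀ u : H, ‖Rm u‖ ≤ δ * ‖u‖)
    (y : ℕ → H)
    (hscheme : ∀ n : ℕ,
      (1 / τ) • (y (n + 1) - y n) + (C₀ (y (n + 1)) + D (y (n + 1)) + Rp (y (n + 1)))
        + Rm (y n) = 0) :
    ∀ n : ℕ, ‖y n‖ ≤ (1 + δ * τ) ^ n * ‖y 0‖ := by
  have hA : ∀ u, 0 ≤ ⟪(C₀ + D + Rp) u, u⟫ := fun u => by
    simp only [LinearMap.add_apply, inner_add_left, hC₀, zero_add]
    exact add_nonneg (hD u) (hRp u)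
  have step : ∀ n, ‖y (n + 1)‖ ≤ (1 + δ * τ) * ‖y n‖ := fun n =>
    norm_le_of_add_smul_eq_sub_smul hA hRmNorm hτ.le
      (add_smul_eq_sub_smul_of_difference_quotient hτ.ne' (hscheme n))
  exact fun n => le_geom (u := fun n => ‖y n‖) (by positivity) n fun k _ => step k

/-- Iterated form of Theorem 2 of the paper: `‖yⁿ‖ ≤ (1 + δτ)ⁿ ‖y⁰‖` for the
explicit-implicit scheme with reaction-operator splitting. -/
theorem stmt_7 {H : Type*} [NormedAddCommGroup H] [InnerProductSpace ℝ H]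
    (C₀ D Rp Rm : H →ₗ[ℝ] H) (δ τ : ℝ) (hδ : 0 < δ) (hτ : 0 < τ)
    (hC₀ : ∀ u : H, ⟪C₀ u, u⟫ = 0)
    (hD : ∀ u : H, 0 ≤ ⟪D u, u⟫)
    (hRp : ∀ u : H, 0 ≤ ⟪Rp u, u⟫)
    (hRmSelfAdj : ∀ u w : H, ⟪Rm u, w⟫ = ⟪u, Rm w⟫)
    (hRmLower : ∀ u : H, -δ * ‖u‖ ^ 2 ≤ ⟪Rm u, u⟫)
    (hRmUpper : ∀ u : H, ⟪Rm u, u⟫ ≤ 0)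
    (hRmNorm : ∀ u : H, ‖Rm u‖ ≤ δ * ‖u‖)
    (y : ℕ → H)
    (hscheme : ∀ n : ℕ,
      (1 / τ) • (y (n + 1) - y n) + (C₀ (y (n + 1)) + D (y (n + 1)) + Rp (y (n + 1)))
        + Rm (y n) = 0) :
    ∀ n : ℕ, ‖y n‖ ≤ (1 + δ * τ) ^ n * ‖y 0‖ :=
  stmt_7_general C₀ D Rp Rm δ τ hδ hτ hC₀ hD hRp hRmNorm y hscheme
end
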